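/- In the sequential discovery model, swapping adjacent products A (position h) and B (position h+1) with u_A^e < u_B^e weakly decreases the expected total discovery costs paid: E[∑_k 1(max of values discovered up to k < z^d(k))·c_d(k)] is weakly smaller after the swap, given c_d(k) ≥ 0 and the stopping rule based on the running maximum versus the weakly decreasing discovery values. -/

import Mathlib

open MeasureTheory

/-- Value of the product displayed at (0-indexed) position `j` under ranking `r`. -/
noncomputable def posVal {Ω : Type*} (n : ℕ) (u : Fin n → ℝ) (M : Fin n → Ω → ℝ)
    (r : Equiv.Perm (Fin n)) (j : ℕ) (ω : Ω) : ℝ :=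
  if h : j < n then u (r ⟨j, h⟩) + M (r ⟨j, h⟩) ω else 0

/-- Running maximum of the outside option value and the first `h` discovered values. -/
noncomputable def runMax {Ω : Type*} (W0 : Ω → ℝ) (v : ℕ → Ω → ℝ) (h : ℕ) (ω : Ω) : ℝ :=
  (Finset.range (h + 1)).sup' (Finset.nonempty_range_iff.mpr (Nat.succ_ne_zero h))
    (fun j => if j = 0 then W0 ω else v (j - 1) ω)

/-- Total discovery costs paid: the consumer pays `cd k` to discover position `k+1`
iff the running maximum of values discovered up to position `k` is below `zd k`. -/
noncomputable def discCost {Ω : Type*} (n : ℕ) (zd cd : ℕ → ℝ) (W0 : Ω → ℝ)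
    (v : ℕ → Ω → ℝ) (ω : Ω) : ℝ :=
  ∑ k ∈ Finset.range n, if runMax W0 v k ω < zd k then cd k else 0

/-!
Only the stopping probability at position `b` changes: for every other `k` the running maximum
at `k` is a maximum over the same set of values. At `b` it is `max R (u_A + M_A)` before and
`max R (u_B + M_B)` after the swap, where `R` is the running maximum at `a`, independent of
both `M_A` and `M_B`. Since `M_A` and `M_B` are identically distributed and `u_A < u_B`,
`P(R < t) * P(u_B + M_B < t) ≤ P(R < t) * P(u_A + M_A < t)`, and the costs are nonnegative.
-/

open ProbabilityTheory

section

variable {Ω : Type*}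

section RunMax

variable (W0 : Ω → ℝ) (v : ℕ → Ω → ℝ)

lemma runMax_eq_partialSups (k : ℕ) (ω : Ω) :
    runMax W0 v k ω = partialSups (fun j => if j = 0 then W0 ω else v (j - 1) ω) k :=
  (partialSups_eq_sup'_range _ k).symm

lemma runMax_zero (ω : Ω) : runMax W0 v 0 ω = W0 ω := by
  simp [runMax_eq_partialSups]

lemma runMax_succ (k : ℕ) (ω : Ω) :
    runMax W0 v (k + 1) ω = max (runMax W0 v k ω) (v k ω) := by
  simp [runMax_eq_partialSups]

lemma measurable_runMax {m : MeasurableSpace Ω} (hW0 : Measurable W0) :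
    ∀ k, (∀ j < k, Measurable (v j)) → Measurable (runMax W0 v k)
  | 0, _ => by simpa [funext (runMax_zero W0 v)] using hW0
  | k + 1, hv => by
    simp only [funext (runMax_succ W0 v k)]
    exact (measurable_runMax hW0 k fun j hj => hv j (by omega)).max (hv k (by omega))

lemma runMax_swap_of_ne (a : ℕ) :
    ∀ k, k ≠ a + 1 → runMax W0 (fun j => v (Equiv.swap a (a + 1) j)) k = runMax W0 v k
  | 0, _ => funext fun ω => by simp only [runMax_zero]
  | k + 1, hk => funext fun ω => by
    rw [runMax_succ, runMax_succ]
    rcases eq_or_ne k (a + 1) with rfl | hka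
    · rw [runMax_succ, runMax_succ, congrFun (runMax_swap_of_ne a a (by omega)) ω,
        Equiv.swap_apply_left, Equiv.swap_apply_right, max_right_comm]
    · rw [congrFun (runMax_swap_of_ne a k hka) ω,
        Equiv.swap_apply_of_ne_of_ne (by omega) hka]

end RunMax

section PosVal

variable (n : ℕ) (u : Fin n → ℝ) (M : Fin n → Ω → ℝ)

lemma posVal_val (r : Equiv.Perm (Fin n)) (i : Fin n) (ω : Ω) :
    posVal n u M r i ω = u (r i) + M (r i) ω := by
  simp [posVal]

lemma posVal_swap_trans (r : Equiv.Perm (Fin n)) (a b : Fin n) (j : ℕ) :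
    posVal n u M ((Equiv.swap a b).trans r) j = posVal n u M r (Equiv.swap (a : ℕ) b j) := by
  rcases eq_or_ne j a with rfl | hja
  · ext; simp [posVal_val]
  rcases eq_or_ne j b with rfl | hjb
  · ext; simp [posVal_val]
  rw [Equiv.swap_apply_of_ne_of_ne hja hjb]
  unfold posVal
  split_ifs with hj
  · rw [Equiv.trans_apply,
      Equiv.swap_apply_of_ne_of_ne (Fin.ne_of_val_ne hja) (Fin.ne_of_val_ne hjb)]
  · rfl

lemma measurable_posVal {m : MeasurableSpace Ω} {r : Equiv.Perm (Fin n)} {j : ℕ}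
    (hM : ∀ hj : j < n, Measurable (M (r ⟨j, hj⟩))) : Measurable (posVal n u M r j) := by
  unfold posVal
  split_ifs with hj
  · exact measurable_const.add (hM hj)
  · exact measurable_const

lemma indepFun_runMax_posVal [MeasurableSpace Ω] (μ : Measure Ω) (W0 : Ω → ℝ)
    (hW0 : Measurable W0) (hM : ∀ i, Measurable (M i))
    (hindep : iIndepFun (Fin.cons W0 M : Fin (n + 1) → Ω → ℝ) μ)
    (r : Equiv.Perm (Fin n)) (m : ℕ) (i : Fin n) (hi : ∀ j : Fin n, (j : ℕ) < m → r j ≠ i) :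
    IndepFun (runMax W0 (posVal n u M r) m) (M i) μ := by
  -- the running maximum is measurable for the σ-algebra of the coordinates other than `i.succ`
  set F : Fin (n + 1) → Ω → ℝ := Fin.cons W0 M
  have hF : ∀ k, Measurable (F k) := Fin.cases hW0 hM
  have hsplit := indep_iSup_of_disjoint (fun k => (hF k).comap_le)
    ((iIndepFun_iff_iIndep _ _ _).1 hindep) (disjoint_compl_left (a := ({i.succ} : Set _)))
  refine (IndepFun_iff_Indep _ _ _).2 (indep_of_indep_of_le hsplit ?_ ?_)
  · refine (measurable_runMax W0 _ (m := ⨆ k ∈ ({i.succ}ᶜ : Set _), _) ?_ m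
      fun j hj => ?_).comap_le
    · exact (comap_measurable (F 0)).mono
        (le_iSup₂_of_le 0 (Fin.succ_ne_zero i).symm le_rfl) le_rfl
    · refine measurable_posVal n u M fun hjn => (comap_measurable (F (r ⟨j, hjn⟩).succ)).mono
        (le_iSup₂_of_le _ ?_ le_rfl) le_rfl
      simpa using hi ⟨j, hjn⟩ hj
  · exact le_iSup₂_of_le i.succ rfl (by simp [F])

end PosVal

section Expectation

variable [MeasurableSpace Ω] (μ : Measure Ω)

lemma measure_max_const_add_lt_le {X Y Y' : Ω → ℝ} (hY : IndepFun X Y μ)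
    (hY' : IndepFun X Y' μ) (hYY' : IdentDistrib Y' Y μ μ) {c c' : ℝ} (hc : c ≤ c') (t : ℝ) :
    μ {ω | max (X ω) (c' + Y' ω) < t} ≤ μ {ω | max (X ω) (c + Y ω) < t} := by
  have hset : ∀ (d : ℝ) (Z : Ω → ℝ),
      {ω | max (X ω) (d + Z ω) < t} = X ⁻¹' Set.Iio t ∩ Z ⁻¹' Set.Iio (t - d) := by
    intro d Z
    ext ω
    simp [lt_sub_iff_add_lt']
  rw [hset, hset, hY.measure_inter_preimage_eq_mul _ _ measurableSet_Iio measurableSet_Iio,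
    hY'.measure_inter_preimage_eq_mul _ _ measurableSet_Iio measurableSet_Iio,
    hYY'.measure_mem_eq measurableSet_Iio]
  gcongr

variable [IsFiniteMeasure μ] (n : ℕ) (zd cd : ℕ → ℝ) {W0 : Ω → ℝ}

lemma integral_discCost (hW0 : Measurable W0) {v : ℕ → Ω → ℝ} (hv : ∀ j, Measurable (v j)) :
    ∫ ω, discCost n zd cd W0 v ω ∂μ =
      ∑ k ∈ Finset.range n, μ.real {ω | runMax W0 v k ω < zd k} * cd k := by
  have hmeas : ∀ k, MeasurableSet {ω | runMax W0 v k ω < zd k} := fun k =>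
    measurableSet_lt (measurable_runMax W0 v hW0 k fun j _ => hv j) measurable_const
  unfold discCost
  refine (integral_finsetSum _ fun k _ => (integrable_const (cd k)).indicator (hmeas k)).trans ?_
  exact Finset.sum_congr rfl fun k _ => integral_indicator_const (cd k) (hmeas k)

lemma integral_discCost_mono (hcd : ∀ k, 0 ≤ cd k) (hW0 : Measurable W0)
    {v v' : ℕ → Ω → ℝ} (hv : ∀ j, Measurable (v j)) (hv' : ∀ j, Measurable (v' j))
    (hle : ∀ k < n, μ {ω | runMax W0 v' k ω < zd k} ≤ μ {ω | runMax W0 v k ω < zd k}) :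
    ∫ ω, discCost n zd cd W0 v' ω ∂μ ≤ ∫ ω, discCost n zd cd W0 v ω ∂μ := by
  rw [integral_discCost μ n zd cd hW0 hv, integral_discCost μ n zd cd hW0 hv']
  refine Finset.sum_le_sum fun k hk => mul_le_mul_of_nonneg_right ?_ (hcd k)
  exact ENNReal.toReal_mono (measure_ne_top μ _) (hle k (Finset.mem_range.1 hk))

end Expectation

end

theorem adjacent_swap_decreases_expected_discovery_costs_general
    {Ω : Type*} [MeasurableSpace Ω] (μ : Measure Ω) [IsProbabilityMeasure μ]
    (n : ℕ) (u : Fin n → ℝ) (M : Fin n → Ω → ℝ) (W0 : Ω → ℝ)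
    (hW0 : Measurable W0) (hM : ∀ i, Measurable (M i))
    (hindep : ProbabilityTheory.iIndepFun
      (Fin.cons W0 M : Fin (n + 1) → Ω → ℝ) μ)
    (hid : ∀ i j : Fin n, μ.map (M i) = μ.map (M j))
    (zd : ℕ → ℝ)
    (cd : ℕ → ℝ) (hcd : ∀ k, 0 ≤ cd k)
    (r : Equiv.Perm (Fin n)) (a b : Fin n) (hab : (a : ℕ) + 1 = (b : ℕ))
    (hu : u (r a) < u (r b)) :
    ∫ ω, discCost n zd cd W0 (posVal n u M ((Equiv.swap a b).trans r)) ω ∂μ ≤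
      ∫ ω, discCost n zd cd W0 (posVal n u M r) ω ∂μ := by
  have hv : ∀ j, Measurable (posVal n u M r j) := fun j => measurable_posVal n u M fun _ => hM _
  have hswap : posVal n u M ((Equiv.swap a b).trans r) =
      fun j => posVal n u M r (Equiv.swap (a : ℕ) ((a : ℕ) + 1) j) :=
    funext fun j => by rw [posVal_swap_trans, hab]
  rw [hswap]
  refine integral_discCost_mono μ n zd cd hcd hW0 hv (fun j => hv _) fun k _ => ?_
  rcases eq_or_ne k (a + 1) with rfl | hk
  · have hA : IndepFun (runMax W0 (posVal n u M r) a) (M (r a)) μ :=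
      indepFun_runMax_posVal n u M μ W0 hW0 hM hindep r a (r a) fun j hj h =>
        hj.ne (congrArg Fin.val (r.injective h))
    have hB : IndepFun (runMax W0 (posVal n u M r) a) (M (r b)) μ :=
      indepFun_runMax_posVal n u M μ W0 hW0 hM hindep r a (r b) fun j hj h => by
        have := congrArg Fin.val (r.injective h)
        omega
    simp only [runMax_succ, runMax_swap_of_ne W0 _ a a (by omega), Equiv.swap_apply_left]
    simp only [hab, posVal_val]
    exact measure_max_const_add_lt_le μ hA hB
      ⟨(hM _).aemeasurable, (hM _).aemeasurable, hid _ _⟩ hu.le _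
  · rw [runMax_swap_of_ne _ _ _ _ hk]

/-- Swapping adjacent products `A` (position `a`) and `B` (position `a+1`)
with `u_A < u_B` weakly decreases the expected total discovery costs paid, given
`cd k ≥ 0` and the stopping rule based on the running maximum versus the weakly
decreasing discovery values. -/
theorem adjacent_swap_decreases_expected_discovery_costs
    {Ω : Type*} [MeasurableSpace Ω] (μ : Measure Ω) [IsProbabilityMeasure μ]
    (n : ℕ) (u : Fin n → ℝ) (M : Fin n → Ω → ℝ) (W0 : Ω → ℝ)
    (hW0 : Measurable W0) (hM : ∀ i, Measurable (M i))
    (hindep : ProbabilityTheory.iIndepFun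
      (Fin.cons W0 M : Fin (n + 1) → Ω → ℝ) μ)
    (hid : ∀ i j : Fin n, μ.map (M i) = μ.map (M j))
    (hcont : ∀ (i : Fin n) (t : ℝ), μ {ω | M i ω = t} = 0)
    (zd : ℕ → ℝ) (hzd : Antitone zd)
    (cd : ℕ → ℝ) (hcd : ∀ k, 0 ≤ cd k)
    (r : Equiv.Perm (Fin n)) (a b : Fin n) (hab : (a : ℕ) + 1 = (b : ℕ))
    (hu : u (r a) < u (r b)) :
    ∫ ω, discCost n zd cd W0 (posVal n u M ((Equiv.swap a b).trans r)) ω ∂μ ≤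
      ∫ ω, discCost n zd cd W0 (posVal n u M r) ω ∂μ :=
  adjacent_swap_decreases_expected_discovery_costs_general μ n u M W0 hW0 hM hindep hid zd cd hcd r
    a b hab hu
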